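/- arXiv:2411.17419 — 8 statements merged into one kernel-verified Lean document; each statement's English description precedes it below -/
import Mathlib

section
/- Let H be a real Hilbert space, let μ ∈ ℝ and ρ > 0 with μρ < 1/4, and let z, w ∈ H with z ≠ 0. Then the inequality ⟨z, w⟩ ≥ μ‖z‖² + ρ‖w‖² holds if and only if the complex number c := (‖w‖/‖z‖)·(cos ∠(z,w) + i·sin ∠(z,w)) lies in the closed disk of center 1/(2ρ) and radius √(1 − 4μρ)/(2ρ), i.e. |c − 1/(2ρ)| ≤ √(1 − 4μρ)/(2ρ). -/
/-! With `θ = ∠(z, w)`, the number `c = (‖w‖/‖z‖) (cos θ + i sin θ)` has `|c| = ‖w‖/‖z‖` and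
`Re c = ⟪z, w⟫/‖z‖²` (also when `w = 0`). Completing the square,
`4ρ² |c - 1/(2ρ)|² = (1 - 4μρ) - 4ρ (Re c - μ - ρ|c|²)`, so the disk is exactly the set of `c`
with `μ + ρ|c|² ≤ Re c`; multiplying by `‖z‖²` turns this into `⟪z, w⟫ ≥ μ‖z‖² + ρ‖w‖²`. -/

open Classical in
/-- The angle between two vectors in a real Hilbert space: `arccos(⟪z,w⟫/(‖z‖‖w‖))`
if both are nonzero, and `0` otherwise. -/
noncomputable def vecAngle {H : Type*} [NormedAddCommGroup H] [InnerProductSpace ℝ H]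
    (z w : H) : ℝ :=
  if z ≠ 0 ∧ w ≠ 0 then Real.arccos ((inner ℝ z w : ℝ) / (‖z‖ * ‖w‖)) else 0

namespace Complex

theorem sq_norm_sub_ofReal (c : ℂ) (x : ℝ) : ‖c - x‖ ^ 2 = ‖c‖ ^ 2 - 2 * x * c.re + x ^ 2 := by
  simp only [Complex.sq_norm, normSq_apply, sub_re, sub_im, ofReal_re, ofReal_im]
  ring

theorem norm_sub_one_div_two_mul_le_iff {μ ρ : ℝ} (hρ : 0 < ρ) (hμρ : μ * ρ ≤ 1 / 4) (c : ℂ) :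
    ‖c - ((1 / (2 * ρ) : ℝ) : ℂ)‖ ≤ √(1 - 4 * μ * ρ) / (2 * ρ) ↔ μ + ρ * ‖c‖ ^ 2 ≤ c.re := by
  have key : (2 * ρ * ‖c - ((1 / (2 * ρ) : ℝ) : ℂ)‖) ^ 2
      = (1 - 4 * μ * ρ) - 4 * ρ * (c.re - (μ + ρ * ‖c‖ ^ 2)) := by
    rw [mul_pow, sq_norm_sub_ofReal]
    field_simp
    ring
  rw [le_div_iff₀ (by positivity), mul_comm, Real.le_sqrt (by positivity) (by linarith), key]
  constructor <;> intro h <;> nlinarith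

theorem norm_ofReal_mul_cos_add_sin_mul_I {r : ℝ} (hr : 0 ≤ r) (θ : ℝ) :
    ‖(r : ℂ) * (Real.cos θ + Real.sin θ * I)‖ = r := by
  rw [norm_mul, norm_real, Real.norm_of_nonneg hr, ofReal_cos, ofReal_sin,
    norm_cos_add_sin_mul_I, mul_one]

theorem re_ofReal_mul_cos_add_sin_mul_I (r θ : ℝ) :
    ((r : ℂ) * (Real.cos θ + Real.sin θ * I)).re = r * Real.cos θ := by
  simp only [mul_re, add_re, ofReal_re, ofReal_im, I_re, I_im]
  ring

end Complex

section Angle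

variable {H : Type*} [NormedAddCommGroup H] [InnerProductSpace ℝ H]

theorem vecAngle_eq_angle {z w : H} (hz : z ≠ 0) (hw : w ≠ 0) :
    vecAngle z w = InnerProductGeometry.angle z w := by
  simp [vecAngle, InnerProductGeometry.angle, hz, hw]

theorem norm_mul_norm_mul_cos_vecAngle (z w : H) :
    ‖z‖ * ‖w‖ * Real.cos (vecAngle z w) = inner ℝ z w := by
  by_cases hz : z = 0
  · simp [hz]
  by_cases hw : w = 0
  · simp [hw]
  rw [vecAngle_eq_angle hz hw, mul_comm, InnerProductGeometry.cos_angle_mul_norm_mul_norm]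

end Angle

theorem stmt_0_general {H : Type*} [NormedAddCommGroup H] [InnerProductSpace ℝ H]
    (μ ρ : ℝ) (hρ : 0 < ρ) (hμρ : μ * ρ < 1 / 4) (z w : H) (hz : z ≠ 0) :
    (inner ℝ z w : ℝ) ≥ μ * ‖z‖ ^ 2 + ρ * ‖w‖ ^ 2 ↔
      ‖(((‖w‖ / ‖z‖ : ℝ) : ℂ) *
              ((Real.cos (vecAngle z w) : ℂ) + (Real.sin (vecAngle z w) : ℂ) * Complex.I) -
            ((1 / (2 * ρ) : ℝ) : ℂ))‖ ≤
        Real.sqrt (1 - 4 * μ * ρ) / (2 * ρ) := by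
  have hz' : 0 < ‖z‖ := norm_pos_iff.2 hz
  rw [Complex.norm_sub_one_div_two_mul_le_iff hρ hμρ.le,
    Complex.norm_ofReal_mul_cos_add_sin_mul_I (by positivity),
    Complex.re_ofReal_mul_cos_add_sin_mul_I, ← norm_mul_norm_mul_cos_vecAngle z w]
  have hlhs : ‖z‖ ^ 2 * (μ + ρ * (‖w‖ / ‖z‖) ^ 2) = μ * ‖z‖ ^ 2 + ρ * ‖w‖ ^ 2 := by
    field_simp
  have hrhs : ‖z‖ ^ 2 * (‖w‖ / ‖z‖ * Real.cos (vecAngle z w))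
      = ‖z‖ * ‖w‖ * Real.cos (vecAngle z w) := by
    field_simp
  rw [ge_iff_le, ← hlhs, ← hrhs, mul_le_mul_iff_of_pos_left (by positivity)]

theorem stmt_0 {H : Type*} [NormedAddCommGroup H] [InnerProductSpace ℝ H] [CompleteSpace H]
    (μ ρ : ℝ) (hρ : 0 < ρ) (hμρ : μ * ρ < 1 / 4) (z w : H) (hz : z ≠ 0) :
    (inner ℝ z w : ℝ) ≥ μ * ‖z‖ ^ 2 + ρ * ‖w‖ ^ 2 ↔
      ‖(((‖w‖ / ‖z‖ : ℝ) : ℂ) *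
              ((Real.cos (vecAngle z w) : ℂ) + (Real.sin (vecAngle z w) : ℂ) * Complex.I) -
            ((1 / (2 * ρ) : ℝ) : ℂ))‖ ≤
        Real.sqrt (1 - 4 * μ * ρ) / (2 * ρ) :=
  stmt_0_general μ ρ hρ hμρ z w hz
end

section
/- Let H be a real Hilbert space, let μ, ρ, α ∈ ℝ with 1 + 2ρα > 0, and let A be a (μ,ρ)-semimonotone set-valued operator on H. Then the operator B := A + α·id (whose graph is {(x, u + αx) : (x,u) ∈ graph A}) is ((μ + α(1 + ρα))/(1 + 2ρα), ρ/(1 + 2ρα))-semimonotone. -/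
/-!
Write `d = x - y` and `e = u - v`, so that the graph of `A + α id` has differences `(d, e + α d)`.
Expanding `‖e + α d‖²`, the semimonotonicity defect of `A + α id` for the new constants,
multiplied by `1 + 2ρα`, is exactly the defect `⟪d, e⟫ - μ‖d‖² - ρ‖e‖²` of `A`, which is
nonnegative.
-/

/-- A set-valued operator `A` on a real Hilbert space is `(μ,ρ)`-semimonotone if
`⟪x - y, u - v⟫ ≥ μ‖x - y‖² + ρ‖u - v‖²` for all `(x,u)`, `(y,v)` in its graph. -/
def Semimonotone {H : Type*} [NormedAddCommGroup H] [InnerProductSpace ℝ H]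
    (μ ρ : ℝ) (A : H → Set H) : Prop :=
  ∀ ⦃x u y v : H⦄, u ∈ A x → v ∈ A y →
    (inner ℝ (x - y) (u - v) : ℝ) ≥ μ * ‖x - y‖ ^ 2 + ρ * ‖u - v‖ ^ 2

theorem inner_add_smul_defect_eq {H : Type*} [NormedAddCommGroup H] [InnerProductSpace ℝ H]
    (μ ρ α : ℝ) (d e : H) :
    (1 + 2 * ρ * α) * inner ℝ d (e + α • d) - (μ + α * (1 + ρ * α)) * ‖d‖ ^ 2
        - ρ * ‖e + α • d‖ ^ 2 =
      inner ℝ d e - μ * ‖d‖ ^ 2 - ρ * ‖e‖ ^ 2 := by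
  have h_inner : inner ℝ d (e + α • d) = inner ℝ d e + α * ‖d‖ ^ 2 := by
    rw [inner_add_right, real_inner_smul_right, real_inner_self_eq_norm_sq]
  have h_norm : ‖e + α • d‖ ^ 2 = ‖e‖ ^ 2 + 2 * α * inner ℝ d e + α ^ 2 * ‖d‖ ^ 2 := by
    rw [norm_add_sq_real, real_inner_smul_right, norm_smul, real_inner_comm, mul_pow,
      Real.norm_eq_abs, sq_abs]
    ring
  rw [h_inner, h_norm]
  ring

theorem stmt_2_general {H : Type*} [NormedAddCommGroup H] [InnerProductSpace ℝ H]
    (μ ρ α : ℝ) (hα : 1 + 2 * ρ * α > 0) (A : H → Set H) (hA : Semimonotone μ ρ A) :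
    Semimonotone ((μ + α * (1 + ρ * α)) / (1 + 2 * ρ * α)) (ρ / (1 + 2 * ρ * α))
      (fun x => (fun u => u + α • x) '' A x) := by
  rintro x _ y _ ⟨u, hu, rfl⟩ ⟨v, hv, rfl⟩
  have h_shift : u + α • x - (v + α • y) = (u - v) + α • (x - y) := by
    rw [smul_sub]; abel
  have h_defect := inner_add_smul_defect_eq μ ρ α (x - y) (u - v)
  rw [h_shift, ge_iff_le, div_mul_eq_mul_div, div_mul_eq_mul_div, ← add_div,
    div_le_iff₀ hα]
  linarith [hA hu hv]

theorem stmt_2 {H : Type*} [NormedAddCommGroup H] [InnerProductSpace ℝ H] [CompleteSpace H]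
    (μ ρ α : ℝ) (hα : 1 + 2 * ρ * α > 0) (A : H → Set H) (hA : Semimonotone μ ρ A) :
    Semimonotone ((μ + α * (1 + ρ * α)) / (1 + 2 * ρ * α)) (ρ / (1 + 2 * ρ * α))
      (fun x => (fun u => u + α • x) '' A x) :=
  stmt_2_general μ ρ α hα A hA
end

section
/- Let H be a real Hilbert space, let μ ∈ ℝ, ρ < 0, α ≥ 0, and θ ∈ [π/2, π) satisfy 1 − 4μρ ≤ (1 − 2αρ)²·sin²(θ). If B is a θ-angle-bounded set-valued operator on H, then the operator B + α·id (whose graph is {(x, u + αx) : (x,u) ∈ graph B}) is (μ,ρ)-semimonotone. -/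
/-- A set-valued operator `A` on a real Hilbert space is `θ`-angle-bounded if
`⟪x - y, u - v⟫ ≥ cos(θ)‖x - y‖‖u - v‖` for all `(x,u)`, `(y,v)` in its graph. -/
def AngleBounded {H : Type*} [NormedAddCommGroup H] [InnerProductSpace ℝ H]
    (θ : ℝ) (A : H → Set H) : Prop :=
  ∀ ⦃x u y v : H⦄, u ∈ A x → v ∈ A y →
    (inner ℝ (x - y) (u - v) : ℝ) ≥ Real.cos θ * (‖x - y‖ * ‖u - v‖)

/-!
Adding `α • id` transforms semimonotonicity parameters: `B + α • id` is `(μ, ρ)`-semimonotone as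
soon as `B` is `((μ - α + ρα²)/k, ρ/k)`-semimonotone, where `k = 1 - 2αρ > 0`. A `θ`-angle-bounded
operator is `(μ', ρ')`-semimonotone whenever `ρ' < 0` and `1 - 4μ'ρ' ≤ sin² θ`, because then the
binary quadratic form `ρ' b² - cos θ · a b + μ' a²` has nonpositive discriminant. The identity
`k² - 4ρ(μ - α + ρα²) = 1 - 4μρ` shows that the hypothesis is exactly this condition for the
transformed parameters.
-/

theorem binary_quadratic_nonpos {ρ β γ : ℝ} (hρ : ρ < 0) (hdisc : β ^ 2 ≤ 4 * ρ * γ) (a b : ℝ) :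
    ρ * b ^ 2 + β * a * b + γ * a ^ 2 ≤ 0 := by
  refine nonpos_of_mul_nonneg_right (a := 4 * ρ) ?_ (by linarith)
  have hsq : 4 * ρ * (ρ * b ^ 2 + β * a * b + γ * a ^ 2)
      = (2 * ρ * b + β * a) ^ 2 + (4 * ρ * γ - β ^ 2) * a ^ 2 := by ring
  rw [hsq]
  have := mul_nonneg (sub_nonneg.mpr hdisc) (sq_nonneg a)
  positivity

section

variable {H : Type*} [NormedAddCommGroup H] [InnerProductSpace ℝ H]

theorem AngleBounded.semimonotone {θ μ ρ : ℝ} {B : H → Set H} (hB : AngleBounded θ B)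
    (hρ : ρ < 0) (hcond : 1 - 4 * μ * ρ ≤ Real.sin θ ^ 2) : Semimonotone μ ρ B := by
  intro x u y v hu hv
  have hdisc : (-Real.cos θ) ^ 2 ≤ 4 * ρ * μ := by
    linarith [Real.sin_sq_add_cos_sq θ, neg_sq (Real.cos θ)]
  have hquad := binary_quadratic_nonpos hρ hdisc ‖x - y‖ ‖u - v‖
  linarith [hB hu hv]

theorem norm_add_smul_sq (α : ℝ) (d e : H) :
    ‖e + α • d‖ ^ 2 = ‖e‖ ^ 2 + 2 * α * inner ℝ d e + α ^ 2 * ‖d‖ ^ 2 := by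
  rw [norm_add_sq_real, inner_smul_right, norm_smul, mul_pow, Real.norm_eq_abs, sq_abs,
    real_inner_comm]
  ring

theorem Semimonotone.image_add_smul_id {μ ρ α : ℝ} {B : H → Set H} (hk : 0 < 1 - 2 * α * ρ)
    (hB : Semimonotone ((μ - α + ρ * α ^ 2) / (1 - 2 * α * ρ)) (ρ / (1 - 2 * α * ρ)) B) :
    Semimonotone μ ρ (fun x => (fun u => u + α • x) '' B x) := by
  rintro x w y z ⟨u, hu, rfl⟩ ⟨v, hv, rfl⟩
  have hdiff : u + α • x - (v + α • y) = (u - v) + α • (x - y) := by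
    rw [smul_sub]; abel
  have hinner : inner ℝ (x - y) ((u - v) + α • (x - y))
      = inner ℝ (x - y) (u - v) + α * ‖x - y‖ ^ 2 := by
    rw [inner_add_right, real_inner_smul_right, real_inner_self_eq_norm_sq]
  have hscaled : (1 - 2 * α * ρ) * inner ℝ (x - y) (u - v)
      ≥ (μ - α + ρ * α ^ 2) * ‖x - y‖ ^ 2 + ρ * ‖u - v‖ ^ 2 := by
    have := mul_le_mul_of_nonneg_left (hB hu hv) hk.le
    rwa [mul_add, ← mul_assoc, ← mul_assoc, mul_div_cancel₀ _ hk.ne',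
      mul_div_cancel₀ _ hk.ne'] at this
  rw [hdiff, hinner, norm_add_smul_sq]
  linarith

end

theorem stmt_6_general {H : Type*} [NormedAddCommGroup H] [InnerProductSpace ℝ H]
    (μ ρ α θ : ℝ) (hρ : ρ < 0) (hα : α ≥ 0)
    (hcond : 1 - 4 * μ * ρ ≤ (1 - 2 * α * ρ) ^ 2 * Real.sin θ ^ 2)
    (B : H → Set H) (hB : AngleBounded θ B) :
    Semimonotone μ ρ (fun x => (fun u => u + α • x) '' B x) := by
  have hk : 0 < 1 - 2 * α * ρ := by nlinarith
  refine Semimonotone.image_add_smul_id hk (hB.semimonotone (div_neg_of_neg_of_pos hρ hk) ?_)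
  calc 1 - 4 * ((μ - α + ρ * α ^ 2) / (1 - 2 * α * ρ)) * (ρ / (1 - 2 * α * ρ))
      _ = (1 - 4 * μ * ρ) / (1 - 2 * α * ρ) ^ 2 := by
        rw [mul_assoc, div_mul_div_comm, ← sq, ← mul_div_assoc, one_sub_div (pow_ne_zero 2 hk.ne')]
        ring
      _ ≤ Real.sin θ ^ 2 := (div_le_iff₀' (pow_pos hk 2)).mpr hcond

theorem stmt_6 {H : Type*} [NormedAddCommGroup H] [InnerProductSpace ℝ H] [CompleteSpace H]
    (μ ρ α θ : ℝ) (hρ : ρ < 0) (hα : α ≥ 0) (hθ : θ ∈ Set.Ico (Real.pi / 2) Real.pi)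
    (hcond : 1 - 4 * μ * ρ ≤ (1 - 2 * α * ρ) ^ 2 * Real.sin θ ^ 2)
    (B : H → Set H) (hB : AngleBounded θ B) :
    Semimonotone μ ρ (fun x => (fun u => u + α • x) '' B x) :=
  stmt_6_general μ ρ α θ hρ hα hcond B hB
end

section
/- Let ρ < 0, α ≥ 0, θ ∈ [π/2, π), and R > 0 with R ≤ sin(θ)·(1/(2|ρ|) + α). Then every complex number of the form z = α + s·e^{iφ} with s ≥ 0 and φ ∈ [−θ, θ] satisfies |z − 1/(2ρ)| ≥ R; that is, the shifted cone {α + s·e^{iφ} : s ≥ 0, |φ| ≤ θ} is disjoint from the open disk of center 1/(2ρ) and radius R. -/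
/-!
Translating by `-1/(2ρ)` turns the claim into a bound on `‖d + s e^{iφ}‖` with
`d = α + 1/(2|ρ|) > 0`. Since `cos φ ≥ cos θ`,
`‖d + s e^{iφ}‖² = d² + 2ds cos φ + s² ≥ (s + d cos θ)² + (d sin θ)² ≥ (d sin θ)²`,
i.e. the cone of half-angle `θ ≤ π` keeps distance at least `d sin θ` from `-d`.
-/

open Real

lemma sq_norm_ofReal_add_mul_exp (d s φ : ℝ) :
    ‖(d : ℂ) + s * Complex.exp (φ * Complex.I)‖ ^ 2 = d ^ 2 + 2 * d * s * cos φ + s ^ 2 := by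
  rw [Complex.sq_norm, Complex.normSq_apply]
  simp only [Complex.exp_mul_I, Complex.add_re, Complex.add_im, Complex.mul_re, Complex.mul_im,
    Complex.ofReal_re, Complex.ofReal_im, Complex.cos_ofReal_re, Complex.cos_ofReal_im,
    Complex.sin_ofReal_re, Complex.sin_ofReal_im, Complex.I_re, Complex.I_im]
  linear_combination s ^ 2 * sin_sq_add_cos_sq φ

lemma mul_sin_le_norm_ofReal_add_mul_exp {d s φ θ : ℝ} (hd : 0 ≤ d) (hs : 0 ≤ s)
    (hθ : θ ≤ π) (hφ : |φ| ≤ θ) :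
    d * sin θ ≤ ‖(d : ℂ) + s * Complex.exp (φ * Complex.I)‖ := by
  have hcos : cos θ ≤ cos φ := by
    simpa only [cos_abs] using cos_le_cos_of_nonneg_of_le_pi (abs_nonneg φ) hθ hφ
  refine le_of_pow_le_pow_left₀ two_ne_zero (norm_nonneg _) ?_
  calc (d * sin θ) ^ 2
      ≤ (s + d * cos θ) ^ 2 + (d * sin θ) ^ 2 := le_add_of_nonneg_left (sq_nonneg _)
    _ = d ^ 2 + 2 * d * s * cos θ + s ^ 2 := by linear_combination d ^ 2 * sin_sq_add_cos_sq θ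
    _ ≤ d ^ 2 + 2 * d * s * cos φ + s ^ 2 := by gcongr
    _ = ‖(d : ℂ) + s * Complex.exp (φ * Complex.I)‖ ^ 2 :=
      (sq_norm_ofReal_add_mul_exp d s φ).symm

theorem stmt_7_general (ρ α θ R : ℝ) (hρ : ρ < 0) (hα : α ≥ 0)
    (hθ : θ ∈ Set.Ico (Real.pi / 2) Real.pi)
    (hRle : R ≤ Real.sin θ * (1 / (2 * |ρ|) + α)) :
    ∀ s φ : ℝ, s ≥ 0 → |φ| ≤ θ →
      ‖(α : ℂ) + (s : ℂ) * Complex.exp ((φ : ℂ) * Complex.I)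
          - ((1 / (2 * ρ) : ℝ) : ℂ)‖ ≥ R := by
  intro s φ hs hφ
  have hd : 0 ≤ α - 1 / (2 * ρ) := by
    have : 1 / (2 * ρ) < 0 := one_div_neg.mpr (by linarith)
    linarith
  have hshift : (α : ℂ) + s * Complex.exp (φ * Complex.I) - ((1 / (2 * ρ) : ℝ) : ℂ)
      = ((α - 1 / (2 * ρ) : ℝ) : ℂ) + s * Complex.exp (φ * Complex.I) := by
    push_cast; ring
  calc R ≤ sin θ * (1 / (2 * |ρ|) + α) := hRle
    _ = (α - 1 / (2 * ρ)) * sin θ := by rw [abs_of_neg hρ]; ring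
    _ ≤ _ := hshift ▸ mul_sin_le_norm_ofReal_add_mul_exp hd hs hθ.2.le hφ

theorem stmt_7 (ρ α θ R : ℝ) (hρ : ρ < 0) (hα : α ≥ 0)
    (hθ : θ ∈ Set.Ico (Real.pi / 2) Real.pi) (hR : R > 0)
    (hRle : R ≤ Real.sin θ * (1 / (2 * |ρ|) + α)) :
    ∀ s φ : ℝ, s ≥ 0 → |φ| ≤ θ →
      ‖(α : ℂ) + (s : ℂ) * Complex.exp ((φ : ℂ) * Complex.I)
          - ((1 / (2 * ρ) : ℝ) : ℂ)‖ ≥ R :=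
  stmt_7_general ρ α θ R hρ hα hθ hRle
end

section
/- Let θ ∈ [π/2, π), α > 0, and set ρ := (1/(2α))·(1 − 1/sin(θ)) < 0. If B is a θ-angle-bounded set-valued operator on a real Hilbert space H, then B + α·id is ρ-comonotone, i.e., ⟨x − y, u − v⟩ ≥ ρ‖u − v‖² for all (x,u), (y,v) in the graph of B + α·id. -/
/-- A set-valued operator `A` is `ρ`-comonotone if
`⟪x - y, u - v⟫ ≥ ρ‖u - v‖²` for all `(x,u)`, `(y,v)` in its graph. -/
def Comonotone {H : Type*} [NormedAddCommGroup H] [InnerProductSpace ℝ H]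
    (ρ : ℝ) (A : H → Set H) : Prop :=
  ∀ ⦃x u y v : H⦄, u ∈ A x → v ∈ A y →
    (inner ℝ (x - y) (u - v) : ℝ) ≥ ρ * ‖u - v‖ ^ 2

/-!
With `a = x - y`, `b = u - v`, `s = sin θ`, `c = cos θ`, multiplying the claimed inequality by
`2αs > 0` turns it into `0 ≤ 2α⟪a, b⟫ + α²(1 + s)‖a‖² + (1 - s)‖b‖²`. By angle-boundedness it
suffices to show this with `⟪a, b⟫` replaced by `c‖a‖‖b‖`, and since `c² = (1 - s)(1 + s)` the
resulting quadratic form in `(‖a‖, ‖b‖)` is `(α(1 + s)‖a‖ + c‖b‖)² / (1 + s)`.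
-/

open Real

lemma quadratic_form_nonneg_of_sq_add_sq_eq_one {α c s A B : ℝ} (hcs : c ^ 2 + s ^ 2 = 1)
    (hs : 0 < 1 + s) :
    0 ≤ α ^ 2 * (1 + s) * A ^ 2 + 2 * α * c * (A * B) + (1 - s) * B ^ 2 := by
  have hsq : (1 + s) * (α ^ 2 * (1 + s) * A ^ 2 + 2 * α * c * (A * B) + (1 - s) * B ^ 2)
      = (α * (1 + s) * A + c * B) ^ 2 := by
    linear_combination (-B ^ 2) * hcs
  exact nonneg_of_mul_nonneg_right (hsq ▸ sq_nonneg _) hs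

lemma mul_norm_add_smul_sq_le_inner {H : Type*} [NormedAddCommGroup H] [InnerProductSpace ℝ H]
    {θ α : ℝ} {a b : H} (hs : 0 < sin θ) (hα : 0 < α)
    (hab : cos θ * (‖a‖ * ‖b‖) ≤ inner ℝ a b) :
    1 / (2 * α) * (1 - 1 / sin θ) * ‖b + α • a‖ ^ 2 ≤ inner ℝ a (b + α • a) := by
  have hinner : inner ℝ a (b + α • a) = inner ℝ a b + α * ‖a‖ ^ 2 := by
    rw [inner_add_right, real_inner_smul_right, real_inner_self_eq_norm_sq]
  have hnorm : ‖b + α • a‖ ^ 2 = ‖b‖ ^ 2 + 2 * α * inner ℝ a b + α ^ 2 * ‖a‖ ^ 2 := by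
    rw [norm_add_sq_real, norm_smul, real_inner_smul_right, real_inner_comm, norm_of_nonneg hα.le]
    ring
  have hquad := quadratic_form_nonneg_of_sq_add_sq_eq_one (α := α) (A := ‖a‖) (B := ‖b‖)
    (cos_sq_add_sin_sq θ) (by linarith [neg_one_le_sin θ])
  have hscaled := mul_le_mul_of_nonneg_left hab (by positivity : 0 ≤ 2 * α)
  have hcleared : 0 ≤ 2 * α * inner ℝ a b + α ^ 2 * (1 + sin θ) * ‖a‖ ^ 2
      + (1 - sin θ) * ‖b‖ ^ 2 := by
    linarith
  have hdiff : inner ℝ a b + α * ‖a‖ ^ 2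
      - 1 / (2 * α) * (1 - 1 / sin θ) * (‖b‖ ^ 2 + 2 * α * inner ℝ a b + α ^ 2 * ‖a‖ ^ 2)
      = (2 * α * inner ℝ a b + α ^ 2 * (1 + sin θ) * ‖a‖ ^ 2 + (1 - sin θ) * ‖b‖ ^ 2)
        / (2 * α * sin θ) := by
    field_simp
    ring
  rw [hinner, hnorm, ← sub_nonneg, hdiff]
  positivity

lemma AngleBounded.comonotone_add_smul_id {H : Type*} [NormedAddCommGroup H]
    [InnerProductSpace ℝ H] {θ α : ℝ} {B : H → Set H} (hB : AngleBounded θ B)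
    (hs : 0 < sin θ) (hα : 0 < α) :
    Comonotone (1 / (2 * α) * (1 - 1 / sin θ)) (fun x => (fun u => u + α • x) '' B x) := by
  rintro x _ y _ ⟨u, hu, rfl⟩ ⟨v, hv, rfl⟩
  have hshift : u + α • x - (v + α • y) = (u - v) + α • (x - y) := by module
  rw [hshift]
  exact mul_norm_add_smul_sq_le_inner hs hα (hB hu hv)

theorem stmt_8_general {H : Type*} [NormedAddCommGroup H] [InnerProductSpace ℝ H]
    (θ α : ℝ) (hθ : θ ∈ Set.Ico (Real.pi / 2) Real.pi) (hα : α > 0)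
    (B : H → Set H) (hB : AngleBounded θ B) :
    Comonotone (1 / (2 * α) * (1 - 1 / Real.sin θ))
      (fun x => (fun u => u + α • x) '' B x) :=
  hB.comonotone_add_smul_id (sin_pos_of_pos_of_lt_pi (by linarith [pi_pos, hθ.1]) hθ.2) hα

theorem stmt_8 {H : Type*} [NormedAddCommGroup H] [InnerProductSpace ℝ H] [CompleteSpace H]
    (θ α : ℝ) (hθ : θ ∈ Set.Ico (Real.pi / 2) Real.pi) (hα : α > 0)
    (B : H → Set H) (hB : AngleBounded θ B) :
    Comonotone (1 / (2 * α) * (1 - 1 / Real.sin θ))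
      (fun x => (fun u => u + α • x) '' B x) :=
  stmt_8_general θ α hθ hα B hB
end

section
/- Let T : ℝ → ℝ be a function and let ℓ > 0 and σ ∈ (−ℓ, ℓ]. Then σ ≤ (T(x) − T(y))/(x − y) ≤ ℓ for all x, y ∈ ℝ with x ≠ y if and only if T is (σℓ/(ℓ+σ), 1/(ℓ+σ))-semimonotone, i.e., if and only if (x − y)(T(x) − T(y)) ≥ (σℓ/(ℓ+σ))·(x − y)² + (1/(ℓ+σ))·(T(x) − T(y))² for all x, y ∈ ℝ. -/
theorem stmt_9 (T : ℝ → ℝ) (ℓ σ : ℝ) (hℓ : ℓ > 0) (hσ : σ ∈ Set.Ioc (-ℓ) ℓ) :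
    (∀ x y : ℝ, x ≠ y → σ ≤ (T x - T y) / (x - y) ∧ (T x - T y) / (x - y) ≤ ℓ) ↔
      ∀ x y : ℝ, (x - y) * (T x - T y) ≥
        σ * ℓ / (ℓ + σ) * (x - y) ^ 2 + 1 / (ℓ + σ) * (T x - T y) ^ 2 := by
  obtain ⟨hσ1, hσ2⟩ := hσ
  have hs : ℓ + σ > 0 := by linarith
  have hsne : ℓ + σ ≠ 0 := ne_of_gt hs
  constructor
  · intro h x y
    rcases eq_or_ne x y with rfl | hxy
    · simp
    obtain ⟨h1, h2⟩ := h x y hxy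
    have hd : x - y ≠ 0 := sub_ne_zero.mpr hxy
    have hq : T x - T y = (T x - T y) / (x - y) * (x - y) := by field_simp
    set q := (T x - T y) / (x - y) with hqdef
    rw [hq]
    have key : (x - y) ^ 2 * ((q - σ) * (ℓ - q)) ≥ 0 :=
      mul_nonneg (sq_nonneg _) (mul_nonneg (by linarith) (by linarith))
    have h3 : (ℓ + σ) * (σ * ℓ / (ℓ + σ)) = σ * ℓ := by field_simp
    have h4 : (ℓ + σ) * (1 / (ℓ + σ)) = 1 := by field_simp
    rw [ge_iff_le, ← mul_le_mul_iff_right₀ hs]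
    nlinarith [key]
  · intro h x y hxy
    have hd : x - y ≠ 0 := sub_ne_zero.mpr hxy
    have hd2 : (x - y) ^ 2 > 0 := by positivity
    have hh := h x y
    have hq : T x - T y = (T x - T y) / (x - y) * (x - y) := by field_simp
    set q := (T x - T y) / (x - y) with hqdef
    rw [hq, ge_iff_le, ← sub_nonneg] at hh
    have key : (x - y) ^ 2 * ((q - σ) * (ℓ - q)) ≥ 0 := by
      have h2 : (ℓ + σ) * ((x - y) * (q * (x - y)) -
          (σ * ℓ / (ℓ + σ) * (x - y) ^ 2 + 1 / (ℓ + σ) * (q * (x - y)) ^ 2)) ≥ 0 :=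
        mul_nonneg (le_of_lt hs) hh
      have h3 : (ℓ + σ) * (σ * ℓ / (ℓ + σ)) = σ * ℓ := by field_simp
      have h4 : (ℓ + σ) * (1 / (ℓ + σ)) = 1 := by field_simp
      nlinarith [h2]
    have key2 : (q - σ) * (ℓ - q) ≥ 0 := nonneg_of_mul_nonneg_right key hd2
    constructor
    · nlinarith [key2]
    · nlinarith [key2]
end

section
/- Let r₁, r₂, v̄ > 0 with r₁ < r₂, and define the piecewise linear tunnel-diode map T : ℝ → ℝ by T(v) = r₁⁻¹(v + v̄) + r₂⁻¹·v̄ if v < −v̄, T(v) = −r₂⁻¹·v if |v| ≤ v̄, and T(v) = r₁⁻¹(v − v̄) − r₂⁻¹·v̄ if v > v̄. Then T is (1/(r₁ − r₂), r₁r₂/(r₂ − r₁))-semimonotone, i.e., (x − y)(T(x) − T(y)) ≥ (1/(r₁ − r₂))·(x − y)² + (r₁r₂/(r₂ − r₁))·(T(x) − T(y))² for all x, y ∈ ℝ. -/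
set_option maxHeartbeats 1000000 in
theorem stmt_10 (r₁ r₂ vb : ℝ) (hr₁ : 0 < r₁) (hr₂ : 0 < r₂) (hvb : 0 < vb)
    (hr : r₁ < r₂) (T : ℝ → ℝ)
    (hT : ∀ v : ℝ,
      T v = if v < -vb then r₁⁻¹ * (v + vb) + r₂⁻¹ * vb
            else if v > vb then r₁⁻¹ * (v - vb) - r₂⁻¹ * vb
            else -r₂⁻¹ * v) :
    ∀ x y : ℝ, (x - y) * (T x - T y) ≥
      1 / (r₁ - r₂) * (x - y) ^ 2 + r₁ * r₂ / (r₂ - r₁) * (T x - T y) ^ 2 := by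
  have h1 : r₁ * r₁⁻¹ = 1 := mul_inv_cancel₀ (ne_of_gt hr₁)
  have h2 : r₂ * r₂⁻¹ = 1 := mul_inv_cancel₀ (ne_of_gt hr₂)
  have hd : (0:ℝ) < r₂ - r₁ := by linarith
  have hi1 : (0:ℝ) < r₁⁻¹ := inv_pos.mpr hr₁
  have hi2 : (0:ℝ) < r₂⁻¹ := inv_pos.mpr hr₂
  have key : ∀ x y : ℝ, y ≤ x →
      0 ≤ ((x - y) + r₂ * (T x - T y)) * ((x - y) - r₁ * (T x - T y)) := by
    intro x y hxy
    have hub : T x - T y ≤ r₁⁻¹ * (x - y) := by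
      rw [hT x, hT y]
      split_ifs <;> nlinarith [hi1.le, hi2.le]
    have hlb : -(r₂⁻¹ * (x - y)) ≤ T x - T y := by
      rw [hT x, hT y]
      split_ifs <;> nlinarith [hi1.le, hi2.le]
    have hA : 0 ≤ (x - y) + r₂ * (T x - T y) := by nlinarith [hlb]
    have hB : 0 ≤ (x - y) - r₁ * (T x - T y) := by nlinarith [hub]
    exact mul_nonneg hA hB
  intro x y
  have key2 : 0 ≤ ((x - y) + r₂ * (T x - T y)) * ((x - y) - r₁ * (T x - T y)) := by
    rcases le_total y x with h | h
    · exact key x y h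
    · have := key y x h
      nlinarith [this]
  have hdiv : 0 ≤ ((x - y) + r₂ * (T x - T y)) * ((x - y) - r₁ * (T x - T y)) / (r₂ - r₁) :=
    div_nonneg key2 hd.le
  have heq : ((x - y) + r₂ * (T x - T y)) * ((x - y) - r₁ * (T x - T y)) / (r₂ - r₁)
      = (x - y) * (T x - T y) -
        (1 / (r₁ - r₂) * (x - y) ^ 2 + r₁ * r₂ / (r₂ - r₁) * (T x - T y) ^ 2) := by
    have hne : r₁ - r₂ ≠ 0 := by linarith
    field_simp
    ring
  linarith [heq ▸ hdiv]
end

section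
/- Let α_R, α_F ∈ [0,1), let R be the real 2×2 matrix with rows (1, −α_R) and (−α_F, 1), and let θ := π/2 + max(arctan(α_F), arctan(α_R)). Then for all z, w ∈ ℝ² with z₁w₁ ≥ 0 and z₂w₂ ≥ 0, it holds that ⟨z, Rw⟩ ≥ cos(θ)·‖z‖·‖Rw‖ (with the Euclidean inner product and norm on ℝ²). Moreover, this bound is tight: it is attained with equality for some such z, w (e.g. z = (0,1), w = (1,0) when α_F ≥ α_R). -/
/-!
Write `v = R w`, `I = ⟪z, v⟫`, `C = z₀ v₁ - z₁ v₀` and `m = max α_F α_R`, so that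
`‖z‖² ‖v‖² = I² + C²` and `cos θ = -m / √(1 + m²)`. The bound is then equivalent to
`I + m |C| ≥ 0`. If `I < 0`, the sign conditions force `z` and `w` into the same closed quadrant,
which after replacing `(z, w)` by `(-z, -w)` is the first one. There `v` lies in the cone
`v₀ + m v₁ ≥ 0`, `v₁ + m v₀ ≥ 0`, i.e. `v` leaves the quadrant by an angle of at most `arctan m`,
and one of `I ± m C` is visibly a nonnegative combination of `z₀, z₁`.
-/

/-- The Ebers–Moll matrix with rows `(1, -αR)` and `(-αF, 1)`, applied to a vector of
`ℝ²` (with the Euclidean inner product and norm). -/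
noncomputable def applyEM (aR aF : ℝ) (w : EuclideanSpace ℝ (Fin 2)) :
    EuclideanSpace ℝ (Fin 2) :=
  (WithLp.equiv 2 (Fin 2 → ℝ)).symm
    ((Matrix.of ![![1, -aR], ![-aF, 1]]).mulVec (WithLp.equiv 2 (Fin 2 → ℝ) w))

open Real

namespace EuclideanSpace

def cross (z v : EuclideanSpace ℝ (Fin 2)) : ℝ := z 0 * v 1 - z 1 * v 0

lemma inner_fin_two (z v : EuclideanSpace ℝ (Fin 2)) :
    inner ℝ z v = z 0 * v 0 + z 1 * v 1 := by
  simp [PiLp.inner_apply, Fin.sum_univ_two, mul_comm]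

lemma norm_sq_fin_two (z : EuclideanSpace ℝ (Fin 2)) : ‖z‖ ^ 2 = z 0 ^ 2 + z 1 ^ 2 := by
  simp [EuclideanSpace.norm_sq_eq, Fin.sum_univ_two]

lemma norm_mul_norm_sq_eq_inner_sq_add_cross_sq (z v : EuclideanSpace ℝ (Fin 2)) :
    (‖z‖ * ‖v‖) ^ 2 = inner ℝ z v ^ 2 + cross z v ^ 2 := by
  rw [mul_pow, norm_sq_fin_two, norm_sq_fin_two, inner_fin_two, cross]
  ring

lemma cross_neg_neg (z v : EuclideanSpace ℝ (Fin 2)) : cross (-z) (-v) = cross z v := by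
  simp [cross]

lemma inner_add_mul_abs_cross_nonneg {m : ℝ} (hm : 0 ≤ m) {z v : EuclideanSpace ℝ (Fin 2)}
    (hz0 : 0 ≤ z 0) (hz1 : 0 ≤ z 1) (hv0 : 0 ≤ v 0 + m * v 1) (hv1 : 0 ≤ v 1 + m * v 0) :
    0 ≤ inner ℝ z v + m * |cross z v| := by
  have hC := neg_abs_le (cross z v)
  have hC' := le_abs_self (cross z v)
  rw [inner_fin_two, cross] at *
  rcases lt_or_ge (v 1) 0 with h1 | h1
  · -- `I - m C = z₀ (v₀ - m v₁) + z₁ (v₁ + m v₀)`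
    nlinarith [mul_nonneg hz0 (by nlinarith : 0 ≤ v 0 - m * v 1), mul_nonneg hz1 hv1]
  rcases lt_or_ge (v 0) 0 with h0 | h0
  · -- `I + m C = z₀ (v₀ + m v₁) + z₁ (v₁ - m v₀)`
    nlinarith [mul_nonneg hz1 (by nlinarith : 0 ≤ v 1 - m * v 0), mul_nonneg hz0 hv0]
  · nlinarith [mul_nonneg hz0 h0, mul_nonneg hz1 h1, abs_nonneg (z 0 * v 1 - z 1 * v 0)]

end EuclideanSpace

open EuclideanSpace

lemma neg_div_sqrt_one_add_sq_mul_le {I C N m : ℝ} (hm : 0 ≤ m) (hN : 0 ≤ N)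
    (hNIC : N ^ 2 = I ^ 2 + C ^ 2) (h : 0 ≤ I + m * |C|) : -(m / √(1 + m ^ 2)) * N ≤ I := by
  have hs : 0 < √(1 + m ^ 2) := by positivity
  rcases le_or_gt 0 I with hI | hI
  · have : 0 ≤ m / √(1 + m ^ 2) * N := by positivity
    linarith
  have hsq : (-I * √(1 + m ^ 2)) ^ 2 ≤ (m * N) ^ 2 := by
    rw [mul_pow, mul_pow, sq_sqrt (by positivity), hNIC, ← sq_abs C]
    nlinarith [abs_nonneg C]
  have := (sq_le_sq₀ (by nlinarith) (by positivity)).1 hsq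
  rw [neg_mul, div_mul_eq_mul_div, neg_le, le_div_iff₀ hs]
  linarith

lemma cos_pi_div_two_add_max_arctan (a b : ℝ) :
    cos (π / 2 + max (arctan a) (arctan b)) = -(max a b / √(1 + max a b ^ 2)) := by
  rw [← arctan_strictMono.monotone.map_max, add_comm, cos_add_pi_div_two, sin_arctan]

section applyEM

variable {aR aF : ℝ}

lemma applyEM_apply_zero (w : EuclideanSpace ℝ (Fin 2)) :
    applyEM aR aF w 0 = w 0 - aR * w 1 := by
  simp [applyEM, dotProduct, Fin.sum_univ_two, sub_eq_add_neg]

lemma applyEM_apply_one (w : EuclideanSpace ℝ (Fin 2)) :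
    applyEM aR aF w 1 = w 1 - aF * w 0 := by
  simp [applyEM, dotProduct, Fin.sum_univ_two, sub_eq_neg_add]

lemma applyEM_neg (w : EuclideanSpace ℝ (Fin 2)) : applyEM aR aF (-w) = -applyEM aR aF w := by
  ext i
  fin_cases i <;> simp [applyEM_apply_zero, applyEM_apply_one, neg_add_eq_sub]

lemma inner_applyEM (z w : EuclideanSpace ℝ (Fin 2)) :
    inner ℝ z (applyEM aR aF w) =
      z 0 * w 0 + z 1 * w 1 - aR * (z 0 * w 1) - aF * (z 1 * w 0) := by
  rw [inner_fin_two, applyEM_apply_zero, applyEM_apply_one]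
  ring

lemma applyEM_mem_cone {m : ℝ} (hm0 : 0 ≤ m) (hm1 : m ≤ 1) (hRm : aR ≤ m) (hFm : aF ≤ m)
    {w : EuclideanSpace ℝ (Fin 2)} (hw0 : 0 ≤ w 0) (hw1 : 0 ≤ w 1) :
    0 ≤ applyEM aR aF w 0 + m * applyEM aR aF w 1 ∧
      0 ≤ applyEM aR aF w 1 + m * applyEM aR aF w 0 := by
  have hmF : m * aF ≤ 1 := by nlinarith
  have hmR : m * aR ≤ 1 := by nlinarith
  rw [applyEM_apply_zero, applyEM_apply_one]
  constructor <;> nlinarith [mul_nonneg (sub_nonneg.2 hmF) hw0, mul_nonneg (sub_nonneg.2 hmR) hw1,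
    mul_nonneg (sub_nonneg.2 hRm) hw1, mul_nonneg (sub_nonneg.2 hFm) hw0]

lemma nonneg_or_nonpos_of_inner_applyEM_neg (hR : 0 ≤ aR) (hF : 0 ≤ aF)
    {z w : EuclideanSpace ℝ (Fin 2)} (h00 : 0 ≤ z 0 * w 0) (h11 : 0 ≤ z 1 * w 1)
    (hI : inner ℝ z (applyEM aR aF w) < 0) :
    (0 ≤ z 0 ∧ 0 ≤ z 1 ∧ 0 ≤ w 0 ∧ 0 ≤ w 1) ∨ (z 0 ≤ 0 ∧ z 1 ≤ 0 ∧ w 0 ≤ 0 ∧ w 1 ≤ 0) := by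
  rw [inner_applyEM] at hI
  have hcross : 0 < z 0 * w 1 ∨ 0 < z 1 * w 0 := by
    by_contra! h
    nlinarith [mul_nonpos_of_nonneg_of_nonpos hR h.1, mul_nonpos_of_nonneg_of_nonpos hF h.2]
  rcases hcross with h | h <;> rcases mul_pos_iff.1 h with h | h
  · exact .inl ⟨h.1.le, nonneg_of_mul_nonneg_left h11 h.2, nonneg_of_mul_nonneg_right h00 h.1,
      h.2.le⟩
  · exact .inr ⟨h.1.le, nonpos_of_mul_nonneg_left h11 h.2, nonpos_of_mul_nonneg_right h00 h.1,
      h.2.le⟩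
  · exact .inl ⟨nonneg_of_mul_nonneg_left h00 h.2, h.1.le, h.2.le,
      nonneg_of_mul_nonneg_right h11 h.1⟩
  · exact .inr ⟨nonpos_of_mul_nonneg_left h00 h.2, h.1.le, h.2.le,
      nonpos_of_mul_nonneg_right h11 h.1⟩

lemma inner_add_mul_abs_cross_applyEM_nonneg (hR : 0 ≤ aR) (hF : 0 ≤ aF) {m : ℝ} (hm1 : m ≤ 1)
    (hRm : aR ≤ m) (hFm : aF ≤ m) {z w : EuclideanSpace ℝ (Fin 2)} (h00 : 0 ≤ z 0 * w 0)
    (h11 : 0 ≤ z 1 * w 1) :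
    0 ≤ inner ℝ z (applyEM aR aF w) + m * |cross z (applyEM aR aF w)| := by
  have hm0 : 0 ≤ m := hR.trans hRm
  rcases le_or_gt 0 (inner ℝ z (applyEM aR aF w)) with hI | hI
  · positivity
  rcases nonneg_or_nonpos_of_inner_applyEM_neg hR hF h00 h11 hI with
    ⟨hz0, hz1, hw0, hw1⟩ | ⟨hz0, hz1, hw0, hw1⟩
  · obtain ⟨hv0, hv1⟩ := applyEM_mem_cone hm0 hm1 hRm hFm hw0 hw1
    exact inner_add_mul_abs_cross_nonneg hm0 hz0 hz1 hv0 hv1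
  · obtain ⟨hv0, hv1⟩ := applyEM_mem_cone (w := -w) hm0 hm1 hRm hFm
      (by simpa using hw0) (by simpa using hw1)
    have := inner_add_mul_abs_cross_nonneg hm0 (z := -z) (by simpa using hz0)
      (by simpa using hz1) hv0 hv1
    rwa [applyEM_neg, inner_neg_neg, cross_neg_neg] at this

lemma applyEM_single_zero : applyEM aR aF (single 0 1) = !₂[1, -aF] := by
  ext i
  fin_cases i <;> simp [applyEM_apply_zero, applyEM_apply_one]

lemma applyEM_single_one : applyEM aR aF (single 1 1) = !₂[-aR, 1] := by
  ext i
  fin_cases i <;> simp [applyEM_apply_zero, applyEM_apply_one]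

end applyEM

theorem stmt_11 (aR aF : ℝ) (haR : aR ∈ Set.Ico (0 : ℝ) 1) (haF : aF ∈ Set.Ico (0 : ℝ) 1) :
    (∀ z w : EuclideanSpace ℝ (Fin 2), z 0 * w 0 ≥ 0 → z 1 * w 1 ≥ 0 →
      (inner ℝ z (applyEM aR aF w) : ℝ) ≥
        Real.cos (Real.pi / 2 + max (Real.arctan aF) (Real.arctan aR)) *
          (‖z‖ * ‖applyEM aR aF w‖)) ∧
    (∃ z w : EuclideanSpace ℝ (Fin 2), z 0 * w 0 ≥ 0 ∧ z 1 * w 1 ≥ 0 ∧ z ≠ 0 ∧ w ≠ 0 ∧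
      (inner ℝ z (applyEM aR aF w) : ℝ) =
        Real.cos (Real.pi / 2 + max (Real.arctan aF) (Real.arctan aR)) *
          (‖z‖ * ‖applyEM aR aF w‖)) := by
  obtain ⟨hR0, hR1⟩ := haR
  obtain ⟨hF0, hF1⟩ := haF
  rw [cos_pi_div_two_add_max_arctan]
  refine ⟨fun z w h00 h11 => ?_, ?_⟩
  · exact neg_div_sqrt_one_add_sq_mul_le (le_max_of_le_left hF0) (by positivity)
      (norm_mul_norm_sq_eq_inner_sq_add_cross_sq _ _)
      (inner_add_mul_abs_cross_applyEM_nonneg hR0 hF0 (max_le hF1.le hR1.le)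
        (le_max_right _ _) (le_max_left _ _) h00 h11)
  rcases le_total aR aF with h | h
  · refine ⟨single 1 1, single 0 1, by simp, by simp, by simp, by simp, ?_⟩
    rw [max_eq_left h, applyEM_single_zero, inner_fin_two]
    have : √(1 + aF ^ 2) ≠ 0 := by positivity
    simp [EuclideanSpace.norm_eq, Fin.sum_univ_two, this]
  · refine ⟨single 0 1, single 1 1, by simp, by simp, by simp, by simp, ?_⟩
    rw [max_eq_right h, applyEM_single_one, inner_fin_two]
    have : √(1 + aR ^ 2) ≠ 0 := by positivity
    simp [EuclideanSpace.norm_eq, Fin.sum_univ_two, add_comm (aR ^ 2), this]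
end
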